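/- arXiv:math-ph/0202047 — 3 statements merged into one kernel-verified Lean document; each statement's English description precedes it below -/
import Mathlib

section
/- Let w(λ) = Σ_{k=0}^{N-1} ρ_k/(λ_k - λ) with λ_0 < ... < λ_{N-1} and ρ_k > 0. Then on each open interval (λ_{k-1}, λ_k), k = 1,...,N-1, the function w has exactly one zero γ_k; in particular w has exactly N-1 real zeros, and they interlace the poles: λ_0 < γ_1 < λ_1 < ... < λ_{N-2} < γ_{N-1} < λ_{N-1}. -/
/-!
Between two consecutive poles every term `ρ j / (λ j - x)` is strictly increasing, so `w` is
strictly increasing there; it runs from `-∞` at the left pole to `+∞` at the right one, hence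
by the intermediate value theorem it vanishes exactly once. Left of all poles every term is
positive and right of all poles every term is negative, so there are no further zeros.
-/

open Finset Filter Topology

theorem tendsto_div_sub_nhdsGT {ρ : ℝ} (hρ : 0 < ρ) (p : ℝ) :
    Tendsto (fun x => ρ / (p - x)) (𝓝[>] p) atBot := by
  have h : Tendsto (fun x => p - x) (𝓝[>] p) (𝓝[<] 0) := by
    rw [← sub_self p]; exact map_subLeft_nhdsGT.le
  simpa only [div_eq_mul_inv, Pi.inv_apply] using h.inv_tendsto_nhdsLT_zero.const_mul_atBot hρ

theorem tendsto_div_sub_nhdsLT {ρ : ℝ} (hρ : 0 < ρ) (p : ℝ) :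
    Tendsto (fun x => ρ / (p - x)) (𝓝[<] p) atTop := by
  have h : Tendsto (fun x => p - x) (𝓝[<] p) (𝓝[>] 0) := by
    rw [← sub_self p]; exact map_subLeft_nhdsLT.le
  simpa only [div_eq_mul_inv, Pi.inv_apply] using h.inv_tendsto_nhdsGT_zero.const_mul_atTop hρ

theorem strictMonoOn_div_sub_Iio {ρ : ℝ} (hρ : 0 < ρ) (p : ℝ) :
    StrictMonoOn (fun x => ρ / (p - x)) (Set.Iio p) := fun _ _ _ hy hxy =>
  div_lt_div_of_pos_left hρ (sub_pos.2 hy) (by linarith)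

theorem strictMonoOn_div_sub_Ioi {ρ : ℝ} (hρ : 0 < ρ) (p : ℝ) :
    StrictMonoOn (fun x => ρ / (p - x)) (Set.Ioi p) := by
  intro x hx y hy hxy
  have key : ρ / (y - p) < ρ / (x - p) :=
    div_lt_div_of_pos_left hρ (sub_pos.2 hx) (by linarith)
  show ρ / (p - x) < ρ / (p - y)
  rw [← neg_sub x p, ← neg_sub y p, div_neg, div_neg]
  exact neg_lt_neg key

section PoleSum

variable {ι : Type*}

noncomputable def poleSum (s : Finset ι) (ρ l : ι → ℝ) (x : ℝ) : ℝ :=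
  ∑ j ∈ s, ρ j / (l j - x)

variable {s : Finset ι} {ρ l : ι → ℝ}

theorem continuousAt_poleSum {x : ℝ} (hx : ∀ j ∈ s, l j ≠ x) :
    ContinuousAt (poleSum s ρ l) x :=
  tendsto_finsetSum _ fun j hj =>
    continuousAt_const.div (continuousAt_const.sub continuousAt_id) (sub_ne_zero.2 (hx j hj))

theorem continuousOn_poleSum {t : Set ℝ} (ht : ∀ j ∈ s, l j ∉ t) :
    ContinuousOn (poleSum s ρ l) t := fun x hx =>
  (continuousAt_poleSum fun j hj hjx => ht j hj (by rwa [hjx])).continuousWithinAt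

theorem strictMonoOn_poleSum (hs : s.Nonempty) (hρ : ∀ j ∈ s, 0 < ρ j) {a b : ℝ}
    (hl : ∀ j ∈ s, l j ∉ Set.Ioo a b) : StrictMonoOn (poleSum s ρ l) (Set.Ioo a b) := by
  intro x hx y hy hxy
  refine sum_lt_sum_of_nonempty hs fun j hj => ?_
  rcases le_or_gt (l j) a with hja | hjb
  · exact strictMonoOn_div_sub_Ioi (hρ j hj) _ (hja.trans_lt hx.1) (hja.trans_lt hy.1) hxy
  · have hbj : b ≤ l j := not_lt.1 fun h => hl j hj ⟨hjb, h⟩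
    exact strictMonoOn_div_sub_Iio (hρ j hj) _ (hx.2.trans_le hbj) (hy.2.trans_le hbj) hxy

theorem poleSum_split [DecidableEq ι] {i : ι} (hi : i ∈ s) :
    poleSum s ρ l = fun x => ρ i / (l i - x) + poleSum (s.erase i) ρ l x :=
  funext fun _ => (add_sum_erase s _ hi).symm

theorem tendsto_poleSum_nhdsGT [DecidableEq ι] (hinj : Set.InjOn l s) {i : ι} (hi : i ∈ s)
    (hρi : 0 < ρ i) :
    Tendsto (poleSum s ρ l) (𝓝[>] (l i)) atBot := by
  have hrest : ContinuousAt (poleSum (s.erase i) ρ l) (l i) := continuousAt_poleSum fun j hj =>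
    hinj.ne (mem_of_mem_erase hj) hi (ne_of_mem_erase hj)
  rw [poleSum_split hi]
  exact (tendsto_div_sub_nhdsGT hρi _).atBot_add (hrest.tendsto.mono_left nhdsWithin_le_nhds)

theorem tendsto_poleSum_nhdsLT [DecidableEq ι] (hinj : Set.InjOn l s) {i : ι} (hi : i ∈ s)
    (hρi : 0 < ρ i) :
    Tendsto (poleSum s ρ l) (𝓝[<] (l i)) atTop := by
  have hrest : ContinuousAt (poleSum (s.erase i) ρ l) (l i) := continuousAt_poleSum fun j hj =>
    hinj.ne (mem_of_mem_erase hj) hi (ne_of_mem_erase hj)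
  rw [poleSum_split hi]
  exact (tendsto_div_sub_nhdsLT hρi _).atTop_add (hrest.tendsto.mono_left nhdsWithin_le_nhds)

theorem existsUnique_poleSum_eq_zero (hρ : ∀ j ∈ s, 0 < ρ j) (hinj : Set.InjOn l s)
    {i k : ι} (hi : i ∈ s) (hk : k ∈ s) (hik : l i < l k)
    (hl : ∀ j ∈ s, l j ∉ Set.Ioo (l i) (l k)) :
    ∃! γ, γ ∈ Set.Ioo (l i) (l k) ∧ poleSum s ρ l γ = 0 := by
  classical
  obtain ⟨γ, hγ, hγ0⟩ := (continuousOn_poleSum hl).surjOn_of_tendsto (Set.nonempty_Ioo.2 hik)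
    ((tendsto_comp_coe_Ioo_atBot hik).2 (tendsto_poleSum_nhdsGT hinj hi (hρ i hi)))
    ((tendsto_comp_coe_Ioo_atTop hik).2 (tendsto_poleSum_nhdsLT hinj hk (hρ k hk)))
    (Set.mem_univ 0)
  exact ⟨γ, ⟨hγ, hγ0⟩, fun γ' hγ' =>
    (strictMonoOn_poleSum ⟨i, hi⟩ hρ hl).injOn hγ'.1 hγ (hγ'.2.trans hγ0.symm)⟩

theorem poleSum_pos (hs : s.Nonempty) (hρ : ∀ j ∈ s, 0 < ρ j) {x : ℝ} (hx : ∀ j ∈ s, x < l j) :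
    0 < poleSum s ρ l x :=
  sum_pos (fun j hj => div_pos (hρ j hj) (sub_pos.2 (hx j hj))) hs

theorem poleSum_neg (hs : s.Nonempty) (hρ : ∀ j ∈ s, 0 < ρ j) {x : ℝ} (hx : ∀ j ∈ s, l j < x) :
    poleSum s ρ l x < 0 :=
  sum_neg (fun j hj => div_neg_of_pos_of_neg (hρ j hj) (sub_neg.2 (hx j hj))) hs

end PoleSum

theorem exists_mem_Ico_sub_one {α : Type*} [LinearOrder α] (f : ℕ → α) {x : α} :
    ∀ {n : ℕ}, f 0 ≤ x → x < f n → ∃ k, 1 ≤ k ∧ k ≤ n ∧ x ∈ Set.Ico (f (k - 1)) (f k)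
  | 0, h0, hn => absurd h0 (not_le.2 hn)
  | n + 1, h0, hn => by
    by_cases hxn : x < f n
    · obtain ⟨k, hk1, hkn, hk⟩ := exists_mem_Ico_sub_one f h0 hxn
      exact ⟨k, hk1, by omega, hk⟩
    · exact ⟨n + 1, le_add_self, le_rfl, not_lt.1 hxn, hn⟩

theorem StrictMonoOn.notMem_Ioo_sub_one {α : Type*} [LinearOrder α] {f : ℕ → α} {N : ℕ}
    (hf : StrictMonoOn f (Set.Iio N)) {j k : ℕ} (hj : j < N) (hk : k < N) :
    f j ∉ Set.Ioo (f (k - 1)) (f k) := by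
  rintro ⟨h1, h2⟩
  have := (hf.lt_iff_lt (show k - 1 < N by omega) hj).1 h1
  have := (hf.lt_iff_lt hj hk).1 h2
  omega

/-- w has exactly one zero γ_k in each interval (λ_{k-1}, λ_k),
k = 1,…,N-1, and these are all real zeros of w (off the poles), so the zeros
interlace the poles. -/
theorem stmt_1 (N : ℕ) (hN : 2 ≤ N) (l ρ : ℕ → ℝ)
    (hl : ∀ i j, i < j → j < N → l i < l j)
    (hρ : ∀ k, k < N → 0 < ρ k) :
    (∀ k, 1 ≤ k → k ≤ N - 1 →
      ∃! γ : ℝ, γ ∈ Set.Ioo (l (k - 1)) (l k) ∧ ∑ j ∈ range N, ρ j / (l j - γ) = 0) ∧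
    (∀ x : ℝ, (∀ j, j < N → x ≠ l j) → (∑ j ∈ range N, ρ j / (l j - x)) = 0 →
      ∃ k, 1 ≤ k ∧ k ≤ N - 1 ∧ x ∈ Set.Ioo (l (k - 1)) (l k)) := by
  have hmono : StrictMonoOn l (Set.Iio N) := fun i _ j hj hij => hl i j hij hj
  have hinj : Set.InjOn l ↑(range N) := by rw [coe_range]; exact hmono.injOn
  have hρ' : ∀ j ∈ range N, 0 < ρ j := fun j hj => hρ j (mem_range.1 hj)
  have hne : (range N).Nonempty := nonempty_range_iff.2 (by omega)
  refine ⟨fun k hk1 hkN => ?_, fun x hx hx0 => ?_⟩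
  · exact existsUnique_poleSum_eq_zero hρ' hinj (mem_range.2 (by omega)) (mem_range.2 (by omega))
      (hl _ _ (by omega) (by omega))
      fun j hj => hmono.notMem_Ioo_sub_one (mem_range.1 hj) (by omega)
  · have hlast : N - 1 < N := by omega
    have hx_ge : l 0 ≤ x := not_lt.1 fun h => (poleSum_pos hne hρ' fun j hj =>
      h.trans_le (hmono.monotoneOn (by omega : 0 < N) (mem_range.1 hj) j.zero_le)).ne' hx0
    have hx_lt : x < l (N - 1) := not_le.1 fun h => (poleSum_neg hne hρ' fun j hj =>
      (hmono.monotoneOn (mem_range.1 hj) hlast (by have := mem_range.1 hj; omega)).trans_lt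
        (h.lt_of_ne (hx _ hlast).symm)).ne hx0
    obtain ⟨k, hk1, hkN, hxk⟩ := exists_mem_Ico_sub_one l hx_ge hx_lt
    exact ⟨k, hk1, hkN, hxk.1.lt_of_ne (hx _ (by omega)).symm, hxk.2⟩
end

section
/- The map from divisors to matrices' spectral data is injective in the following sense: fixing λ_0 < ... < λ_{N-1}, the map sending (γ_1,...,γ_{N-1}) with λ_{k-1} < γ_k < λ_k to the weights (ρ_0,...,ρ_{N-1}), ρ_n = ∏_s(λ_n - γ_s)/∏_{m≠n}(λ_n - λ_m), is injective: distinct interlacing divisor sequences yield distinct weight vectors. -/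
open Finset Polynomial

/-!
Clearing the nonzero denominators, the weights say that the monic polynomials
`∏ₛ (X - γₛ)` and `∏ₛ (X - γ'ₛ)` of degree `N - 1` agree at the `N` distinct points `λₙ`,
so they are equal and have the same roots. Each `γₖ` is therefore some `γ'ₛ`, and
interlacing forces `s = k`, since the intervals `(λₛ₋₁, λₛ)` are pairwise disjoint.
-/

theorem multiset_eq_of_prod_sub_eq_on {R : Type*} [CommRing R] [IsDomain R]
    {m m' : Multiset R} {T : Finset R} (hm : Multiset.card m < #T)
    (hm' : Multiset.card m' < #T)
    (h : ∀ x ∈ T, (m.map (x - ·)).prod = (m'.map (x - ·)).prod) : m = m' := by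
  have hdeg (s : Multiset R) (hs : Multiset.card s < #T) :
      (s.map fun a => X - C a).prod.degree < (#T : WithBot ℕ) := by
    refine degree_le_natDegree.trans_lt ?_
    rw [natDegree_multiset_prod_X_sub_C_eq_card]
    exact_mod_cast hs
  have hpoly : (m.map fun a => X - C a).prod = (m'.map fun a => X - C a).prod :=
    eq_of_degrees_lt_of_eval_finset_eq T (hdeg m hm) (hdeg m' hm') fun x hx => by
      simpa [eval_multiset_prod, Multiset.map_map] using h x hx
  simpa only [roots_multiset_prod_X_sub_C] using congrArg roots hpoly

theorem MonotoneOn.le_of_apply_pred_lt_of_lt_apply {α : Type*} [Preorder α] {N : ℕ}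
    {l : ℕ → α} (hl : MonotoneOn l (Set.Iio N)) {k s : ℕ} {x : α} (hk : k - 1 < N)
    (hs : s < N) (hkx : l (k - 1) < x) (hxs : x < l s) : k ≤ s := by
  by_contra! hsk
  have : l s ≤ l (k - 1) := hl hs hk (by omega)
  exact lt_irrefl x ((hxs.trans_le this).trans hkx)

theorem stmt_9_general (N : ℕ) (l g g' : ℕ → ℝ)
    (hl : ∀ i j, i < j → j < N → l i < l j)
    (hint : ∀ k, 1 ≤ k → k ≤ N - 1 → l (k - 1) < g k ∧ g k < l k)
    (hint' : ∀ k, 1 ≤ k → k ≤ N - 1 → l (k - 1) < g' k ∧ g' k < l k)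
    (hρ : ∀ n, n < N →
      (∏ s ∈ Icc 1 (N - 1), (l n - g s)) / ∏ m ∈ (range N).erase n, (l n - l m) =
      (∏ s ∈ Icc 1 (N - 1), (l n - g' s)) / ∏ m ∈ (range N).erase n, (l n - l m)) :
    ∀ k, 1 ≤ k → k ≤ N - 1 → g k = g' k := by
  have hmono : StrictMonoOn l (Set.Iio N) := fun i _ j hj hij => hl i j hij hj
  have hnum : ∀ x ∈ (range N).image l,
      ∏ s ∈ Icc 1 (N - 1), (x - g s) = ∏ s ∈ Icc 1 (N - 1), (x - g' s) := by
    simp only [mem_image, mem_range, forall_exists_index, and_imp]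
    rintro _ n hn rfl
    refine (div_left_inj' (prod_ne_zero_iff.mpr fun m hm => sub_ne_zero.mpr ?_)).mp (hρ n hn)
    obtain ⟨hmn, hm⟩ := mem_erase.mp hm
    exact hmono.injOn.ne (Set.mem_Iio.mpr hn) (Set.mem_Iio.mpr (mem_range.mp hm)) hmn.symm
  intro k hk1 hkN
  have hcard : #(Icc 1 (N - 1)) < #((range N).image l) := by
    rw [card_image_of_injOn (by simpa using hmono.injOn), Nat.card_Icc, card_range]
    omega
  have hroots : (Icc 1 (N - 1)).val.map g = (Icc 1 (N - 1)).val.map g' :=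
    multiset_eq_of_prod_sub_eq_on (by simpa using hcard) (by simpa using hcard)
      fun x hx => by
        simpa only [Multiset.map_map, Function.comp_def, ← prod_eq_multiset_prod] using hnum x hx
  obtain ⟨s, hs, hgs⟩ : ∃ s ∈ Icc 1 (N - 1), g' s = g k :=
    Multiset.mem_map.mp (hroots ▸ Multiset.mem_map_of_mem g (mem_Icc.mpr ⟨hk1, hkN⟩))
  obtain ⟨hs1, hsN⟩ := mem_Icc.mp hs
  have hgk := hint k hk1 hkN
  have hgs' := hint' s hs1 hsN
  rw [hgs] at hgs'
  have hks := hmono.monotoneOn.le_of_apply_pred_lt_of_lt_apply (by omega) (by omega) hgk.1 hgs'.2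
  have hsk := hmono.monotoneOn.le_of_apply_pred_lt_of_lt_apply (by omega) (by omega) hgs'.1 hgk.2
  rw [← hgs, le_antisymm hks hsk]

/-- fixing the spectrum λ_0 < … < λ_{N-1}, the map from interlacing
divisors (γ_1,…,γ_{N-1}) to weights ρ_n = ∏_s(λ_n - γ_s)/∏_{m≠n}(λ_n - λ_m)
is injective. -/
theorem stmt_9 (N : ℕ) (hN : 2 ≤ N) (l g g' : ℕ → ℝ)
    (hl : ∀ i j, i < j → j < N → l i < l j)
    (hint : ∀ k, 1 ≤ k → k ≤ N - 1 → l (k - 1) < g k ∧ g k < l k)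
    (hint' : ∀ k, 1 ≤ k → k ≤ N - 1 → l (k - 1) < g' k ∧ g' k < l k)
    (hρ : ∀ n, n < N →
      (∏ s ∈ Icc 1 (N - 1), (l n - g s)) / ∏ m ∈ (range N).erase n, (l n - l m) =
      (∏ s ∈ Icc 1 (N - 1), (l n - g' s)) / ∏ m ∈ (range N).erase n, (l n - l m)) :
    ∀ k, 1 ≤ k → k ≤ N - 1 → g k = g' k :=
  stmt_9_general N l g g' hl hint hint' hρ
end

section
/- Define the formal bracket on pairs of values of a function w by {w(λ), w(μ)} = (w(λ) - w(μ))²/(λ - μ). For a rational function w(λ) = Σ_k ρ_k/(λ_k - λ) with distinct poles, this bracket, expressed via the coordinates (ρ_k, λ_k) with Poisson relations {ρ_k, ρ_n} = 2ρ_k ρ_n/(λ_n - λ_k) for k ≠ n, {ρ_k, λ_n} = ρ_k δ_k^n, {λ_k, λ_n} = 0, reproduces the Atiyah–Hitchin formula: i.e., if one computes {w(λ), w(μ)} by bilinearity and Leibniz from these coordinate brackets, the result equals (w(λ)-w(μ))²/(λ-μ) for all λ, μ off the poles. -/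
open Finset

/-!
Put `t k = ρ k / ((λ_k - λ)(λ_k - μ))`. Since `ρ/(a - λ) - ρ/(a - μ) = (λ - μ) ρ/((a - λ)(a - μ))`,
the right-hand side is `(λ - μ) (∑ t k)² = (λ - μ) ∑_{k,n} t k t n`. The `{ρ_k, λ_k}` brackets produce
exactly the diagonal terms `(λ - μ) t k ²`. A single off-diagonal `{ρ_k, ρ_n}` term is not of the form
`(λ - μ) t k t n`, but the sum of the `(k, n)` and `(n, k)` terms is `2 (λ - μ) t k t n`; this is where
the factor `2` and the antisymmetry of `1/(λ_n - λ_k)` enter.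
-/

section DoubleSums

variable {ι M : Type*} [AddCommMonoid M]

theorem sum_sum_eq_sum_diag_add_sum_sum_ite_ne [DecidableEq ι] (s : Finset ι) (F : ι → ι → M) :
    ∑ k ∈ s, ∑ n ∈ s, F k n = ∑ k ∈ s, F k k + ∑ k ∈ s, ∑ n ∈ s, if k ≠ n then F k n else 0 := by
  rw [← sum_add_distrib]
  refine sum_congr rfl fun k hk => ?_
  rw [← sum_filter, filter_ne, add_sum_erase _ _ hk]

theorem sum_sum_eq_of_add_swap [IsAddTorsionFree M] {s : Finset ι} {F G : ι → ι → M}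
    (h : ∀ k ∈ s, ∀ n ∈ s, F k n + F n k = G k n + G n k) :
    ∑ k ∈ s, ∑ n ∈ s, F k n = ∑ k ∈ s, ∑ n ∈ s, G k n := by
  have symm (H : ι → ι → M) :
      2 • ∑ k ∈ s, ∑ n ∈ s, H k n = ∑ k ∈ s, ∑ n ∈ s, (H k n + H n k) := by
    rw [two_nsmul]
    nth_rw 2 [sum_comm]
    simp only [sum_add_distrib]
  rw [← nsmul_right_inj two_ne_zero, symm, symm]
  exact sum_congr rfl fun k hk => sum_congr rfl fun n hn => h k hk n hn

end DoubleSums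

section AtiyahHitchin

variable {K : Type*} [Field K]

theorem div_sub_sub_sub_div_sub_sub {a x y ρ : K} (hx : a - x ≠ 0) (hy : a - y ≠ 0) :
    ρ / (a - x) - ρ / (a - y) = (x - y) * (ρ / ((a - x) * (a - y))) := by
  field_simp
  ring

theorem bracket_rho_lambda_diag {a x y ρ : K} (hx : a - x ≠ 0) (hy : a - y ≠ 0) :
    (1 / (a - x) * (-ρ / (a - y) ^ 2) - 1 / (a - y) * (-ρ / (a - x) ^ 2)) * ρ
      = (x - y) * (ρ / ((a - x) * (a - y)) * (ρ / ((a - x) * (a - y)))) := by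
  field_simp
  ring

theorem bracket_rho_rho_add_swap {a b x y ρ σ : K} (hab : a - b ≠ 0) (hax : a - x ≠ 0)
    (hay : a - y ≠ 0) (hbx : b - x ≠ 0) (hby : b - y ≠ 0) :
    1 / (a - x) * (1 / (b - y)) * (2 * ρ * σ / (b - a))
        + 1 / (b - x) * (1 / (a - y)) * (2 * σ * ρ / (a - b))
      = (x - y) * (ρ / ((a - x) * (a - y)) * (σ / ((b - x) * (b - y))))
        + (x - y) * (σ / ((b - x) * (b - y)) * (ρ / ((a - x) * (a - y)))) := by
  have hba : b - a ≠ 0 := by rwa [← neg_sub, neg_ne_zero]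
  field_simp
  ring

theorem coordinate_bracket_eq_atiyahHitchin [CharZero K] {ι : Type*} [DecidableEq ι]
    (s : Finset ι) (l ρ : ι → K) (hl : Set.InjOn l s) {x y : K}
    (hx : ∀ k ∈ s, l k ≠ x) (hy : ∀ k ∈ s, l k ≠ y) :
    (∑ k ∈ s, ∑ n ∈ s,
        ((1 / (l k - x)) * (-(ρ n) / (l n - y) ^ 2) -
         (1 / (l k - y)) * (-(ρ n) / (l n - x) ^ 2)) *
          (if k = n then ρ k else 0))
    + (∑ k ∈ s, ∑ n ∈ s,
        if k ≠ n then
          (1 / (l k - x)) * (1 / (l n - y)) * (2 * ρ k * ρ n / (l n - l k))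
        else 0)
    = ((∑ k ∈ s, ρ k / (l k - x)) - (∑ k ∈ s, ρ k / (l k - y))) ^ 2 / (x - y) := by
  have hx' k (hk : k ∈ s) : l k - x ≠ 0 := sub_ne_zero.2 (hx k hk)
  have hy' k (hk : k ∈ s) : l k - y ≠ 0 := sub_ne_zero.2 (hy k hk)
  set t : ι → K := fun k => ρ k / ((l k - x) * (l k - y))
  have hdiff : (∑ k ∈ s, ρ k / (l k - x)) - (∑ k ∈ s, ρ k / (l k - y))
      = (x - y) * ∑ k ∈ s, t k := by
    rw [← sum_sub_distrib, mul_sum]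
    exact sum_congr rfl fun k hk => div_sub_sub_sub_div_sub_sub (hx' k hk) (hy' k hk)
  have hrhs : ((x - y) * ∑ k ∈ s, t k) ^ 2 / (x - y)
      = ∑ k ∈ s, ∑ n ∈ s, (x - y) * (t k * t n) := by
    rw [mul_pow, mul_div_right_comm, sq, mul_self_div_self, sq, sum_mul_sum, mul_sum]
    simp only [mul_sum]
  rw [hdiff, hrhs, sum_sum_eq_sum_diag_add_sum_sum_ite_ne s fun k n => (x - y) * (t k * t n)]
  congr 1
  · refine sum_congr rfl fun k hk => ?_
    simp only [mul_ite, mul_zero]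
    rw [sum_ite_eq_of_mem _ _ _ hk]
    exact bracket_rho_lambda_diag (hx' k hk) (hy' k hk)
  · refine sum_sum_eq_of_add_swap fun k hk n hn => ?_
    by_cases hkn : k = n
    · simp [hkn]
    · simp only [if_pos hkn, if_pos (Ne.symm hkn)]
      exact bracket_rho_rho_add_swap (sub_ne_zero.2 fun h => hkn (hl hk hn h))
        (hx' k hk) (hy' k hk) (hx' n hn) (hy' n hn)

end AtiyahHitchin

theorem stmt_11_general (N : ℕ) (l ρ : ℕ → ℝ)
    (hl : ∀ i j, i < N → j < N → i ≠ j → l i ≠ l j)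
    (x y : ℝ)
    (hx : ∀ k, k < N → x ≠ l k) (hy : ∀ k, k < N → y ≠ l k) :
    (∑ k ∈ range N, ∑ n ∈ range N,
        ((1 / (l k - x)) * (-(ρ n) / (l n - y) ^ 2) -
         (1 / (l k - y)) * (-(ρ n) / (l n - x) ^ 2)) *
          (if k = n then ρ k else 0))
    + (∑ k ∈ range N, ∑ n ∈ range N,
        if k ≠ n then
          (1 / (l k - x)) * (1 / (l n - y)) * (2 * ρ k * ρ n / (l n - l k))
        else 0)
    = ((∑ k ∈ range N, ρ k / (l k - x)) - (∑ k ∈ range N, ρ k / (l k - y))) ^ 2 /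
        (x - y) :=
  coordinate_bracket_eq_atiyahHitchin (range N) l ρ
    (fun i hi j hj h => by_contra fun hij => hl i j (mem_range.1 hi) (mem_range.1 hj) hij h)
    (fun k hk => (hx k (mem_range.1 hk)).symm) (fun k hk => (hy k (mem_range.1 hk)).symm)

/-- the coordinate brackets {ρ_k,ρ_n} = 2ρ_kρ_n/(λ_n-λ_k) (k≠n),
{ρ_k,λ_n} = ρ_k δ_k^n, {λ_k,λ_n} = 0, combined by bilinearity/Leibniz through the
partial derivatives ∂w(λ)/∂ρ_k = 1/(λ_k-λ), ∂w(λ)/∂λ_n = -ρ_n/(λ_n-λ)²,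
reproduce the Atiyah–Hitchin formula {w(λ),w(μ)} = (w(λ)-w(μ))²/(λ-μ). -/
theorem stmt_11 (N : ℕ) (hN : 1 ≤ N) (l ρ : ℕ → ℝ)
    (hl : ∀ i j, i < N → j < N → i ≠ j → l i ≠ l j)
    (hρ : ∀ k, k < N → ρ k ≠ 0)
    (x y : ℝ) (hxy : x ≠ y)
    (hx : ∀ k, k < N → x ≠ l k) (hy : ∀ k, k < N → y ≠ l k) :
    (∑ k ∈ range N, ∑ n ∈ range N,
        ((1 / (l k - x)) * (-(ρ n) / (l n - y) ^ 2) -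
         (1 / (l k - y)) * (-(ρ n) / (l n - x) ^ 2)) *
          (if k = n then ρ k else 0))
    + (∑ k ∈ range N, ∑ n ∈ range N,
        if k ≠ n then
          (1 / (l k - x)) * (1 / (l n - y)) * (2 * ρ k * ρ n / (l n - l k))
        else 0)
    = ((∑ k ∈ range N, ρ k / (l k - x)) - (∑ k ∈ range N, ρ k / (l k - y))) ^ 2 /
        (x - y) :=
  stmt_11_general N l ρ hl x y hx hy
end
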